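/- Assume S² = id on H. Then the map T : A^e ◇ H → A^e ◇ H, T((a⊗b)⊗h) = (b⊗a)⊗S(h), is an algebra anti-homomorphism satisfying T² = id. -/

import Mathlib

/-!
Since `S` is an anti-homomorphism of algebras and of coalgebras, `Δ(S h) = S h₂ ⊗ S h₁`, applying
`T` to the product formula of `A^e ◇ H` reproduces the product `T(y) T(x)` term by term, once
`S² = id` turns the `S (S h₁)` that appears there back into `h₁`. The anti-comultiplicativity of
`S` holds because `Δ ∘ S` and `(S ⊗ S) ∘ τ ∘ Δ` are a right and a left convolution inverse of `Δ`.
-/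

open scoped TensorProduct
open Finset

theorem TensorProduct.exists_sum_range_tmul {R M N : Type*} [CommSemiring R] [AddCommMonoid M]
    [AddCommMonoid N] [Module R M] [Module R N] (x : M ⊗[R] N) :
    ∃ (n : ℕ) (f : ℕ → M) (g : ℕ → N), x = ∑ i ∈ range n, f i ⊗ₜ[R] g i := by
  induction x with
  | zero => exact ⟨0, 0, 0, by simp⟩
  | tmul m n => exact ⟨1, fun _ => m, fun _ => n, by simp⟩
  | add x y hx hy =>
    obtain ⟨n, f, g, rfl⟩ := hx
    obtain ⟨n', f', g', rfl⟩ := hy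
    refine ⟨n + n', fun i => if i < n then f i else f' (i - n),
      fun i => if i < n then g i else g' (i - n), ?_⟩
    rw [sum_range_add]
    congr 1
    · exact sum_congr rfl fun i hi => by simp [mem_range.mp hi]
    · simp

section Hopf

open Coalgebra TensorProduct WithConv

namespace Coalgebra

variable {R C M ι : Type*} [CommSemiring R] [AddCommMonoid C] [Module R C] [Coalgebra R C]
  [AddCommMonoid M] [Module R M]

theorem sum_sum_map_tmul_tmul_eq (Φ : C ⊗[R] (C ⊗[R] C) →ₗ[R] M) {c : C} (r : Repr R c ι) :
    ∑ i ∈ r.index, ∑ j ∈ (ℛ R (r.left i)).index,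
      Φ ((ℛ R (r.left i)).left j ⊗ₜ ((ℛ R (r.left i)).right j ⊗ₜ r.right i)) =
    ∑ i ∈ r.index, Φ (r.left i ⊗ₜ comul (r.right i)) := by
  simp only [← map_sum, ← (ℛ R _).eq, tmul_sum]
  rw [sum_tmul_tmul_eq r (fun i => ℛ R (r.left i)) (fun i => ℛ R (r.right i))]

end Coalgebra

namespace HopfAlgebra

variable {R A ι : Type*} [CommSemiring R] [Semiring A] [HopfAlgebra R A]

theorem sum_antipode_tmul_one_mul_comul {a : A} (r : Repr R a ι) :
    ∑ i ∈ r.index, (antipode R (r.left i) ⊗ₜ[R] (1 : A)) * comul (r.right i) = 1 ⊗ₜ a := by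
  let Θ : A ⊗[R] (A ⊗[R] A) →ₗ[R] A ⊗[R] A := LinearMap.mul' R (A ⊗[R] A) ∘ₗ
    map (Algebra.TensorProduct.includeLeft.toLinearMap ∘ₗ antipode R) LinearMap.id
  calc _ = ∑ i ∈ r.index, Θ (r.left i ⊗ₜ comul (r.right i)) := by simp [Θ]
    _ = ∑ i ∈ r.index, (∑ j ∈ (ℛ R (r.left i)).index,
          antipode R ((ℛ R (r.left i)).left j) * (ℛ R (r.left i)).right j) ⊗ₜ r.right i := by
        rw [← sum_sum_map_tmul_tmul_eq Θ r]
        simp [Θ, sum_tmul]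
    _ = 1 ⊗ₜ a := by
        simp_rw [sum_antipode_mul_eq_smul, smul_tmul, ← tmul_sum, sum_counit_smul]

theorem antipode_map_comm_comul_convMul_comul :
    toConv (map (antipode R) (antipode R) ∘ₗ (TensorProduct.comm R A A).toLinearMap ∘ₗ comul) *
      toConv (comul (R := R) (A := A)) = 1 := by
  let Ψ : A ⊗[R] (A ⊗[R] A) →ₗ[R] A ⊗[R] A := LinearMap.mul' R (A ⊗[R] A) ∘ₗ
    map (map (antipode R) (antipode R) ∘ₗ (TensorProduct.comm R A A).toLinearMap) comul ∘ₗ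
    (TensorProduct.assoc R A A A).symm.toLinearMap
  have hΨ : ∀ x y z : A, Ψ (x ⊗ₜ (y ⊗ₜ z)) =
      (1 ⊗ₜ antipode R x) * ((antipode R y ⊗ₜ 1) * comul z) := fun x y z => by
    simp [Ψ, ← mul_assoc]
  ext c
  let r := ℛ R c
  calc _ = ∑ i ∈ r.index, Ψ (r.left i ⊗ₜ comul (r.right i)) := by
        rw [r.convMul_apply, ← sum_sum_map_tmul_tmul_eq]
        simp [Ψ, ← (ℛ R _).eq, Finset.sum_mul]
    _ = ∑ i ∈ r.index, (1 ⊗ₜ antipode R (r.left i)) *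
          ∑ j ∈ (ℛ R (r.right i)).index,
            (antipode R ((ℛ R (r.right i)).left j) ⊗ₜ 1) * comul ((ℛ R (r.right i)).right j) := by
        refine Finset.sum_congr rfl fun i _ => ?_
        rw [← (ℛ R (r.right i)).eq, tmul_sum, map_sum, Finset.mul_sum]
        simp only [hΨ]
    _ = ∑ i ∈ r.index, (1 ⊗ₜ antipode R (r.left i)) * (1 ⊗ₜ r.right i) := by
        simp_rw [sum_antipode_tmul_one_mul_comul]
    _ = _ := by
        simp only [Algebra.TensorProduct.tmul_mul_tmul, one_mul, ← tmul_sum,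
          sum_antipode_mul_eq_smul, tmul_smul, smul_tmul']
        simp [Algebra.smul_def]

theorem comul_comp_antipode :
    comul ∘ₗ antipode R = map (antipode R) (antipode R) ∘ₗ
      (TensorProduct.comm R A A).toLinearMap ∘ₗ comul (R := R) (A := A) :=
  (WithConv.toConv_injective (left_inv_eq_right_inv antipode_map_comm_comul_convMul_comul
    LinearMap.comul_right_inv)).symm

theorem comul_antipode_eq_sum {s : Finset ι} {f g : ι → A} {h : A}
    (hh : comul (R := R) h = ∑ i ∈ s, f i ⊗ₜ g i) :
    comul (antipode R h) = ∑ i ∈ s, antipode R (g i) ⊗ₜ[R] antipode R (f i) := by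
  rw [← LinearMap.comp_apply (comul (R := R)), comul_comp_antipode]
  simp [hh, map_sum]

end HopfAlgebra

end Hopf

section AntiAutomorphism

variable {k H A : Type*} [CommSemiring k] [Semiring H] [HopfAlgebra k H] [Semiring A] [Algebra k A]
  {l : H →ₗ[k] A →ₗ[k] A}
  {mulK : ((A ⊗[k] A) ⊗[k] H) →ₗ[k] ((A ⊗[k] A) ⊗[k] H) →ₗ[k] ((A ⊗[k] A) ⊗[k] H)}
  {T : ((A ⊗[k] A) ⊗[k] H) →ₗ[k] ((A ⊗[k] A) ⊗[k] H)}

theorem apply_mulK_tmul_tmul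
    (hinv : ∀ h : H, HopfAlgebra.antipode k (HopfAlgebra.antipode k h) = h)
    (hK : ∀ (a b a' b' : A) (h h' : H) (s t : Finset ℕ) (f g f' g' : ℕ → H),
      Coalgebra.comul (R := k) h = ∑ i ∈ s, f i ⊗ₜ[k] g i →
      Coalgebra.comul (R := k) h' = ∑ j ∈ t, f' j ⊗ₜ[k] g' j →
      mulK ((a ⊗ₜ[k] b) ⊗ₜ[k] h) ((a' ⊗ₜ[k] b') ⊗ₜ[k] h') =
        ∑ i ∈ s, ∑ j ∈ t,
          ((a * l (f i) a') ⊗ₜ[k] (b' * l (HopfAlgebra.antipode k (g' j)) b)) ⊗ₜ[k] (g i * f' j))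
    (hT : ∀ (a b : A) (h : H),
      T ((a ⊗ₜ[k] b) ⊗ₜ[k] h) = (b ⊗ₜ[k] a) ⊗ₜ[k] HopfAlgebra.antipode k h)
    (a b a' b' : A) (h h' : H) :
    T (mulK ((a ⊗ₜ[k] b) ⊗ₜ[k] h) ((a' ⊗ₜ[k] b') ⊗ₜ[k] h')) =
      mulK (T ((a' ⊗ₜ[k] b') ⊗ₜ[k] h')) (T ((a ⊗ₜ[k] b) ⊗ₜ[k] h)) := by
  obtain ⟨n, f, g, hh⟩ := TensorProduct.exists_sum_range_tmul (Coalgebra.comul (R := k) h)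
  obtain ⟨n', f', g', hh'⟩ := TensorProduct.exists_sum_range_tmul (Coalgebra.comul (R := k) h')
  rw [hK _ _ _ _ _ _ _ _ _ _ _ _ hh hh', hT, hT,
    hK _ _ _ _ _ _ _ _ _ _ _ _ (HopfAlgebra.comul_antipode_eq_sum hh')
      (HopfAlgebra.comul_antipode_eq_sum hh), sum_comm]
  simp [hT, hinv, HopfAlgebra.antipode_mul_antidistrib, map_sum]

end AntiAutomorphism

theorem stmt_13_general (k H A : Type) [Field k] [Ring H] [HopfAlgebra k H]
    [Ring A] [Algebra k A]
    (hinv : ∀ h : H, HopfAlgebra.antipode (R := k) (HopfAlgebra.antipode (R := k) h) = h)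
    (l : H →ₗ[k] A →ₗ[k] A)
    (mulK : ((A ⊗[k] A) ⊗[k] H) →ₗ[k] ((A ⊗[k] A) ⊗[k] H) →ₗ[k] ((A ⊗[k] A) ⊗[k] H))
    (hK : ∀ (a b a' b' : A) (h h' : H) (s t : Finset ℕ) (f g f' g' : ℕ → H),
      Coalgebra.comul (R := k) h = ∑ i ∈ s, f i ⊗ₜ[k] g i →
      Coalgebra.comul (R := k) h' = ∑ j ∈ t, f' j ⊗ₜ[k] g' j →
      mulK ((a ⊗ₜ[k] b) ⊗ₜ[k] h) ((a' ⊗ₜ[k] b') ⊗ₜ[k] h') =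
        ∑ i ∈ s, ∑ j ∈ t,
          ((a * l (f i) a') ⊗ₜ[k] (b' * l (HopfAlgebra.antipode (R := k) (g' j)) b)) ⊗ₜ[k] (g i * f' j))
    (T : ((A ⊗[k] A) ⊗[k] H) →ₗ[k] ((A ⊗[k] A) ⊗[k] H))
    (hT : ∀ (a b : A) (h : H),
      T ((a ⊗ₜ[k] b) ⊗ₜ[k] h) = (b ⊗ₜ[k] a) ⊗ₜ[k] HopfAlgebra.antipode (R := k) h) :
    (∀ x y : (A ⊗[k] A) ⊗[k] H, T (mulK x y) = mulK (T y) (T x)) ∧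
    T (((1 : A) ⊗ₜ[k] (1 : A)) ⊗ₜ[k] (1 : H)) = ((1 : A) ⊗ₜ[k] (1 : A)) ⊗ₜ[k] (1 : H) ∧
    (∀ x : (A ⊗[k] A) ⊗[k] H, T (T x) = x) := by
  have hanti : mulK.compr₂ T = mulK.flip.compl₁₂ T T :=
    TensorProduct.ext_threefold fun a b h => TensorProduct.ext_threefold fun a' b' h' =>
      apply_mulK_tmul_tmul hinv hK hT a b a' b' h h'
  have hinvol : T ∘ₗ T = LinearMap.id :=
    TensorProduct.ext_threefold fun a b h => by simp [hT, hinv]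
  exact ⟨LinearMap.congr_fun₂ hanti, by rw [hT, HopfAlgebra.antipode_one],
    LinearMap.congr_fun hinvol⟩

/-- if `S² = id`, the map `T((a⊗b)⊗h) = (b⊗a)⊗S(h)` is an algebra
anti-homomorphism of Kadison's algebra `A^e ◇ H` with `T² = id`. -/
theorem stmt_13 (k H A : Type) [Field k] [Ring H] [HopfAlgebra k H]
    [Ring A] [Algebra k A]
    (hinv : ∀ h : H, HopfAlgebra.antipode (R := k) (HopfAlgebra.antipode (R := k) h) = h)
    (l : H →ₗ[k] A →ₗ[k] A)
    (hl_one : ∀ a : A, l 1 a = a)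
    (hl_mul : ∀ (h h' : H) (a : A), l (h * h') a = l h (l h' a))
    (hl_unit : ∀ h : H, l h (1 : A) = Coalgebra.counit (R := k) h • (1 : A))
    (hl_meas : ∀ (h : H) (a b : A) (s : Finset ℕ) (f g : ℕ → H),
      Coalgebra.comul (R := k) h = ∑ i ∈ s, f i ⊗ₜ[k] g i →
      l h (a * b) = ∑ i ∈ s, l (f i) a * l (g i) b)
    (mulK : ((A ⊗[k] A) ⊗[k] H) →ₗ[k] ((A ⊗[k] A) ⊗[k] H) →ₗ[k] ((A ⊗[k] A) ⊗[k] H))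
    (hK : ∀ (a b a' b' : A) (h h' : H) (s t : Finset ℕ) (f g f' g' : ℕ → H),
      Coalgebra.comul (R := k) h = ∑ i ∈ s, f i ⊗ₜ[k] g i →
      Coalgebra.comul (R := k) h' = ∑ j ∈ t, f' j ⊗ₜ[k] g' j →
      mulK ((a ⊗ₜ[k] b) ⊗ₜ[k] h) ((a' ⊗ₜ[k] b') ⊗ₜ[k] h') =
        ∑ i ∈ s, ∑ j ∈ t,
          ((a * l (f i) a') ⊗ₜ[k] (b' * l (HopfAlgebra.antipode (R := k) (g' j)) b)) ⊗ₜ[k] (g i * f' j))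
    (T : ((A ⊗[k] A) ⊗[k] H) →ₗ[k] ((A ⊗[k] A) ⊗[k] H))
    (hT : ∀ (a b : A) (h : H),
      T ((a ⊗ₜ[k] b) ⊗ₜ[k] h) = (b ⊗ₜ[k] a) ⊗ₜ[k] HopfAlgebra.antipode (R := k) h) :
    (∀ x y : (A ⊗[k] A) ⊗[k] H, T (mulK x y) = mulK (T y) (T x)) ∧
    T (((1 : A) ⊗ₜ[k] (1 : A)) ⊗ₜ[k] (1 : H)) = ((1 : A) ⊗ₜ[k] (1 : A)) ⊗ₜ[k] (1 : H) ∧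
    (∀ x : (A ⊗[k] A) ⊗[k] H, T (T x) = x) :=
  stmt_13_general k H A hinv l mulK hK T hT
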